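/- Suppose the one-step solution operator satisfies ‖S(ž, f)‖ ≤ ‖ž‖ + τ‖f‖ and the update is z_m^n = S(α z_{m−1}^{n−1} + (1−α) z_m^{n−1}, f_m^n) with α ∈ [0,1]. Then for all n, max_{0≤m≤M} ‖z_m^n‖ ≤ max(max_{0≤m≤M} ‖z_m^0‖, max_{n'≤n} ‖z_0^{n'}‖) + n·τ·max_{m,n'≤n} ‖f_m^{n'}‖. -/

import Mathlib

open Finset

/-!
The closed ball of radius `C` is convex, so if both neighbours `z_{m-1}^{n-1}` and `z_m^{n-1}`
lie in it, so does the averaged state `ž_m^n`; one application of `S` then enlarges the bound by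
at most `τ ‖f_m^n‖`. Induction on the time level `n`, with the boundary values `z_0^n` and the
initial values `z_m^0` bounded by `C` directly, gives `‖z_m^n‖ ≤ C + n τ F`.
-/

theorem norm_smul_add_one_sub_smul_le {E : Type*} [SeminormedAddCommGroup E] [NormedSpace ℝ E]
    {x y : E} {a C : ℝ} (ha : a ∈ Set.Icc (0 : ℝ) 1) (hx : ‖x‖ ≤ C) (hy : ‖y‖ ≤ C) :
    ‖a • x + (1 - a) • y‖ ≤ C := by
  rw [← mem_closedBall_zero_iff] at hx hy ⊢
  exact convex_closedBall (0 : E) C hx hy ha.1 (sub_nonneg.2 ha.2) (add_sub_cancel a 1)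

theorem norm_le_of_scheme {X : Type*} [NormedAddCommGroup X] [NormedSpace ℝ X]
    {M N : ℕ} {τ C F : ℝ} (hτ : 0 ≤ τ)
    {S : X → X → X} (hS : ∀ zcheck f, ‖S zcheck f‖ ≤ ‖zcheck‖ + τ * ‖f‖)
    {α : ℕ → ℕ → ℝ} (hα : ∀ m n, α m n ∈ Set.Icc (0 : ℝ) 1)
    {f z : ℕ → ℕ → X}
    (hrec : ∀ m, 1 ≤ m → m ≤ M → ∀ n, 1 ≤ n →
      z m n = S (α m n • z (m - 1) (n - 1) + (1 - α m n) • z m (n - 1)) (f m n))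
    (hinit : ∀ m ≤ M, ‖z m 0‖ ≤ C) (hbdry : ∀ n ≤ N, ‖z 0 n‖ ≤ C)
    (hf : ∀ m ≤ M, ∀ n ≤ N, ‖f m n‖ ≤ F) :
    ∀ n ≤ N, ∀ m ≤ M, ‖z m n‖ ≤ C + n * τ * F := by
  have hF : 0 ≤ F := (norm_nonneg _).trans (hf 0 (Nat.zero_le M) 0 (Nat.zero_le N))
  intro n
  induction n with
  | zero => simpa using hinit
  | succ n ih =>
    intro hn m hm
    rcases Nat.eq_zero_or_pos m with rfl | hm0
    · have : 0 ≤ ((n + 1 : ℕ) : ℝ) * τ * F := by positivity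
      linarith [hbdry (n + 1) hn]
    · have havg := norm_smul_add_one_sub_smul_le (hα m (n + 1))
        (ih (by omega) (m - 1) (by omega)) (ih (by omega) m hm)
      have hfτ : τ * ‖f m (n + 1)‖ ≤ τ * F := mul_le_mul_of_nonneg_left (hf m hm (n + 1) hn) hτ
      rw [hrec m hm0 hm (n + 1) n.succ_pos, Nat.add_sub_cancel]
      push_cast
      linarith [hS (α m (n + 1) • z (m - 1) n + (1 - α m (n + 1)) • z m n) (f m (n + 1))]

/-- Stability of the full scheme: if the one-step solution operator satisfies
`‖S(ž,f)‖ ≤ ‖ž‖ + τ‖f‖` and `z_m^n = S(α_m^n z_{m-1}^{n-1} + (1-α_m^n) z_m^{n-1}, f_m^n)`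
with `α_m^n ∈ [0,1]`, then
`max_{0≤m≤M} ‖z_m^n‖ ≤ max(max_m ‖z_m^0‖, max_{n'≤n} ‖z_0^{n'}‖) + n·τ·max_{m,n'≤n} ‖f_m^{n'}‖`. -/
theorem scheme_stability
    {X : Type*} [NormedAddCommGroup X] [NormedSpace ℝ X]
    (M : ℕ) (τ : ℝ) (hτ : 0 ≤ τ)
    (S : X → X → X) (hS : ∀ zcheck f, ‖S zcheck f‖ ≤ ‖zcheck‖ + τ * ‖f‖)
    (α : ℕ → ℕ → ℝ) (hα : ∀ m n, α m n ∈ Set.Icc (0 : ℝ) 1)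
    (f : ℕ → ℕ → X) (z : ℕ → ℕ → X)
    (hrec : ∀ m, 1 ≤ m → m ≤ M → ∀ n, 1 ≤ n →
      z m n = S (α m n • z (m - 1) (n - 1) + (1 - α m n) • z m (n - 1)) (f m n)) :
    ∀ n, ∀ m ≤ M,
      ‖z m n‖ ≤
        max ((range (M + 1)).sup' nonempty_range_add_one (fun m' => ‖z m' 0‖))
            ((range (n + 1)).sup' nonempty_range_add_one (fun n' => ‖z 0 n'‖))
        + n * τ *
          ((range (M + 1) ×ˢ range (n + 1)).sup'
            (nonempty_range_add_one.product nonempty_range_add_one)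
            (fun p => ‖f p.1 p.2‖)) := by
  intro n
  refine norm_le_of_scheme hτ hS hα hrec ?_ ?_ ?_ n le_rfl
  · intro m hm
    exact le_max_of_le_left <| le_sup' (fun m' => ‖z m' 0‖) (mem_range_succ_iff.2 hm)
  · intro n' hn'
    exact le_max_of_le_right <| le_sup' (fun n' => ‖z 0 n'‖) (mem_range_succ_iff.2 hn')
  · intro m hm n' hn'
    exact le_sup' (fun p : ℕ × ℕ => ‖f p.1 p.2‖) (s := range (M + 1) ×ˢ range (n + 1))
      (b := (m, n')) (mem_product.2 ⟨mem_range_succ_iff.2 hm, mem_range_succ_iff.2 hn'⟩)
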